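/- arXiv:1407.0960 — 4 statements merged into one kernel-verified Lean document; each statement's English description precedes it below -/
import Mathlib

section
/- Let (X,d) be a compact metric space, let Y ⊆ X × X be a closed subset, and let μ and ν be Borel probability measures on X. Then there exists a (μ,ν)-coupling π supported on Y if and only if ν(p₁₂^Y(S)) ≥ μ(S) for every closed subset S ⊆ X. (For closed S the set p₁₂^Y(S) is compact, hence closed and Borel.) -/
/-!
Necessity: a coupling supported on `Y` carries the `μ`-mass of `S` into `p₁₂^Y(S)`.

Sufficiency: if `f x + g y ≤ c` on `Y`, Hall's condition applied to the superlevel sets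
`{t ≤ f}` says that the law of `f` under `μ` is stochastically dominated by the law of `c - g`
under `ν`, so `∫ f dμ + ∫ g dν ≤ c`. Hence `f(x) + g(y) ↦ ∫ f dμ + ∫ g dν` is dominated by the
sublinear functional `h ↦ sup_Y h` on `C(X × X)`, and Hahn–Banach extends it to a linear
functional `L ≤ sup_Y`. Such an `L` is positive, so by Riesz–Markov–Kakutani it is integration
against a finite measure `π`, whose marginals are `μ` and `ν`. Finally
`∫ infDist(·, Y) dπ ≤ sup_Y infDist(·, Y) = 0`, so `π` is concentrated on `Y`.
-/

open MeasureTheory Set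
open scoped CompactlySupported BoundedContinuousFunction

theorem LinearMap.exists_extension_comp_of_le_sublinear {E F : Type*}
    [AddCommGroup E] [Module ℝ E] [AddCommGroup F] [Module ℝ F]
    (T : F →ₗ[ℝ] E) (g : F →ₗ[ℝ] ℝ) (N : E → ℝ)
    (N_hom : ∀ c : ℝ, 0 < c → ∀ x, N (c • x) = c * N x)
    (N_add : ∀ x y, N (x + y) ≤ N x + N y) (hg : ∀ p, g p ≤ N (T p)) :
    ∃ L : E →ₗ[ℝ] ℝ, (∀ p, L (T p) = g p) ∧ ∀ x, L x ≤ N x := by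
  have N_zero : N 0 = 0 := by
    have := N_hom 2 two_pos 0
    rw [smul_zero] at this
    linarith
  have hker : LinearMap.ker T ≤ LinearMap.ker g := fun p hp => by
    rw [LinearMap.mem_ker] at hp ⊢
    have h₁ := hg p
    have h₂ := hg (-p)
    rw [map_neg, map_neg, hp, neg_zero, N_zero] at *
    linarith
  let g₀ : LinearMap.range T →ₗ[ℝ] ℝ :=
    (LinearMap.ker T).liftQ g hker ∘ₗ T.quotKerEquivRange.symm.toLinearMap
  have hg₀ : ∀ p, g₀ ⟨T p, LinearMap.mem_range_self T p⟩ = g p := fun p => by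
    simp [g₀, LinearMap.quotKerEquivRange_symm_apply_image]
  obtain ⟨L, hLg, hLN⟩ := exists_extension_of_le_sublinear ⟨_, g₀⟩ N N_hom N_add
    (by rintro ⟨_, p, rfl⟩; exact (hg₀ p).trans_le (hg p))
  exact ⟨L, fun p => (hLg ⟨T p, p, rfl⟩).trans (hg₀ p), hLN⟩

section Sublinear

variable {Z : Type*} [TopologicalSpace Z] [CompactSpace Z]

lemma ContinuousMap.bddAbove_range_comp_subtype (h : C(Z, ℝ)) (Y : Set Z) :
    BddAbove (range fun z : Y => h z) :=
  (isCompact_range h.continuous).bddAbove.mono (range_comp_subset_range _ _)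

lemma ContinuousMap.iSup_add_le (Y : Set Z) (h₁ h₂ : C(Z, ℝ)) :
    ⨆ z : Y, (h₁ + h₂) z ≤ (⨆ z : Y, h₁ z) + ⨆ z : Y, h₂ z := by
  rcases isEmpty_or_nonempty Y with hY | hY
  · simp
  · exact ciSup_le fun z => add_le_add (le_ciSup (h₁.bddAbove_range_comp_subtype Y) z)
      (le_ciSup (h₂.bddAbove_range_comp_subtype Y) z)

end Sublinear

section StochasticDominance

variable {α β : Type*} [MeasurableSpace α] [MeasurableSpace β] {μ : Measure α} {ν : Measure β}

theorem integral_le_integral_of_forall_pos_measure_le {f : α → ℝ} {h : β → ℝ}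
    (hf₀ : 0 ≤ᵐ[μ] f) (hh₀ : 0 ≤ᵐ[ν] h) (hf : AEStronglyMeasurable f μ) (hh : Integrable h ν)
    (hfh : ∀ t, 0 < t → μ {x | t ≤ f x} ≤ ν {y | t ≤ h y}) :
    ∫ x, f x ∂μ ≤ ∫ y, h y ∂ν := by
  rw [integral_eq_lintegral_of_nonneg_ae hf₀ hf, integral_eq_lintegral_of_nonneg_ae hh₀ hh.1]
  refine ENNReal.toReal_mono hh.lintegral_lt_top.ne ?_
  rw [lintegral_eq_lintegral_meas_le μ hf₀ hf.aemeasurable,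
    lintegral_eq_lintegral_meas_le ν hh₀ hh.1.aemeasurable]
  exact setLIntegral_mono' measurableSet_Ioi hfh

theorem integral_le_integral_of_forall_measure_le [IsProbabilityMeasure μ]
    [IsProbabilityMeasure ν] {f : α → ℝ} {h : β → ℝ} {a : ℝ} (hf : Integrable f μ)
    (hh : Integrable h ν) (hfa : ∀ x, a ≤ f x)
    (hfh : ∀ t, μ {x | t ≤ f x} ≤ ν {y | t ≤ h y}) :
    ∫ x, f x ∂μ ≤ ∫ y, h y ∂ν := by
  have hha : ∀ᵐ y ∂ν, a ≤ h y := by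
    have hfull : ν {y | a ≤ h y} = 1 :=
      le_antisymm prob_le_one (by simpa [hfa] using hfh a)
    exact ae_iff.2 <|
      (prob_compl_eq_zero_iff₀ (nullMeasurableSet_le aemeasurable_const hh.aemeasurable)).2 hfull
  have key := integral_le_integral_of_forall_pos_measure_le (μ := μ) (ν := ν)
    (f := fun x => f x - a) (h := fun y => h y - a)
    (.of_forall fun x => sub_nonneg.2 (hfa x)) (hha.mono fun y hy => sub_nonneg.2 hy)
    (hf.sub (integrable_const a)).1 (hh.sub (integrable_const a))
    fun t _ => by simpa only [le_sub_iff_add_le] using hfh (t + a)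
  rw [integral_sub hf (integrable_const a), integral_sub hh (integrable_const a)] at key
  simpa using key

end StochasticDominance

section Hall

variable {X : Type*} [TopologicalSpace X] [CompactSpace X] [MeasurableSpace X]
  [OpensMeasurableSpace X]

protected lemma ContinuousMap.integrable (f : C(X, ℝ)) (μ : Measure X) [IsFiniteMeasure μ] :
    Integrable f μ :=
  f.continuous.integrable_of_hasCompactSupport (.of_compactSpace f)

@[simps]
noncomputable def ContinuousMap.integralLinearMap (μ : Measure X) [IsFiniteMeasure μ] :
    C(X, ℝ) →ₗ[ℝ] ℝ where
  toFun f := ∫ x, f x ∂μ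
  map_add' f g := integral_add (f.integrable μ) (g.integrable μ)
  map_smul' c f := integral_smul c f

variable {Y : Set (X × X)} {μ ν : Measure X} [IsProbabilityMeasure μ] [IsProbabilityMeasure ν]

theorem integral_add_integral_le_of_hall
    (hall : ∀ S : Set X, IsClosed S → μ S ≤ ν {y | ∃ x ∈ S, (x, y) ∈ Y})
    (f g : C(X, ℝ)) {c : ℝ} (hc : ∀ x y, (x, y) ∈ Y → f x + g y ≤ c) :
    ∫ x, f x ∂μ + ∫ y, g y ∂ν ≤ c := by
  obtain ⟨a, ha⟩ := (isCompact_range f.continuous).bddBelow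
  have hdom : ∀ t, μ {x | t ≤ f x} ≤ ν {y | t ≤ c - g y} := fun t => by
    refine (hall _ (isClosed_le continuous_const f.continuous)).trans (measure_mono ?_)
    rintro y ⟨x, hx, hxy⟩
    exact le_sub_iff_add_le.2 ((add_le_add_left hx _).trans (hc x y hxy))
  have key := integral_le_integral_of_forall_measure_le (h := fun y => c - g y)
    (f.integrable μ) ((integrable_const c).sub (g.integrable ν)) (fun x => ha ⟨x, rfl⟩) hdom
  rw [integral_sub (integrable_const c) (g.integrable ν)] at key
  simp only [integral_const, probReal_univ, smul_eq_mul, one_mul] at key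
  linarith

theorem exists_linearMap_le_iSup_of_hall
    (hall : ∀ S : Set X, IsClosed S → μ S ≤ ν {y | ∃ x ∈ S, (x, y) ∈ Y}) :
    ∃ L : C(X × X, ℝ) →ₗ[ℝ] ℝ, (∀ f : C(X, ℝ), L (f.comp .fst) = ∫ x, f x ∂μ) ∧
      (∀ g : C(X, ℝ), L (g.comp .snd) = ∫ y, g y ∂ν) ∧ ∀ h, L h ≤ ⨆ z : Y, h z := by
  let T : C(X, ℝ) × C(X, ℝ) →ₗ[ℝ] C(X × X, ℝ) :=
    (ContinuousMap.compRightAlgHom ℝ ℝ .fst).toLinearMap.coprod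
      (ContinuousMap.compRightAlgHom ℝ ℝ .snd).toLinearMap
  have hT : ∀ p x y, T p (x, y) = p.1 x + p.2 y := fun _ _ _ => rfl
  obtain ⟨L, hLT, hLY⟩ := LinearMap.exists_extension_comp_of_le_sublinear T
    ((ContinuousMap.integralLinearMap μ).coprod (ContinuousMap.integralLinearMap ν))
    (fun h => ⨆ z : Y, h z)
    (fun c hc h => (Real.mul_iSup_of_nonneg hc.le _).symm)
    (ContinuousMap.iSup_add_le Y)
    fun p => integral_add_integral_le_of_hall hall p.1 p.2 fun x y hxy =>
      (hT p x y).symm.trans_le (le_ciSup ((T p).bddAbove_range_comp_subtype Y) ⟨(x, y), hxy⟩)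
  refine ⟨L, fun f => ?_, fun g => ?_, hLY⟩
  · simpa [T] using hLT (f, 0)
  · simpa [T] using hLT (0, g)

end Hall

theorem exists_isFiniteMeasure_integral_eq {Z : Type*} [TopologicalSpace Z] [T2Space Z]
    [CompactSpace Z] [MeasurableSpace Z] [BorelSpace Z] (L : C(Z, ℝ) →ₗ[ℝ] ℝ)
    (hL : ∀ h, 0 ≤ h → 0 ≤ L h) :
    ∃ π : Measure Z, IsFiniteMeasure π ∧ ∀ h : C(Z, ℝ), ∫ z, h z ∂π = L h := by
  let Λ : C_c(Z, ℝ) →ₚ[ℝ] ℝ := PositiveLinearMap.mk₀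
    { toFun f := L f
      map_add' f g := L.map_add f g
      map_smul' c f := L.map_smul c f }
    fun f hf => hL f hf
  exact ⟨RealRMK.rieszMeasure Λ, inferInstance, fun h =>
    RealRMK.integral_rieszMeasure Λ (CompactlySupportedContinuousMap.continuousMapEquiv h)⟩

theorem MeasureTheory.Measure.map_eq_of_forall_integral_comp_eq {Z X : Type*}
    [MeasurableSpace Z] [TopologicalSpace X] [MeasurableSpace X] [HasOuterApproxClosed X]
    [BorelSpace X] {π : Measure Z} [IsFiniteMeasure π] {μ : Measure X} [IsFiniteMeasure μ]
    {φ : Z → X} (hφ : Measurable φ) (h : ∀ f : X →ᵇ ℝ, ∫ z, f (φ z) ∂π = ∫ x, f x ∂μ) :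
    π.map φ = μ :=
  ext_of_forall_integral_eq_of_IsFiniteMeasure fun f => by
    rw [integral_map hφ.aemeasurable f.continuous.aestronglyMeasurable, h f]

theorem measure_compl_eq_zero_of_integral_infDist_nonpos {Z : Type*} [MetricSpace Z]
    [MeasurableSpace Z] {π : Measure Z} {Y : Set Z} (hY : IsClosed Y) (hYne : Y.Nonempty)
    (hint : Integrable (fun z => Metric.infDist z Y) π)
    (h : ∫ z, Metric.infDist z Y ∂π ≤ 0) : π Yᶜ = 0 := by
  have hzero : (fun z => Metric.infDist z Y) =ᵐ[π] 0 :=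
    (integral_eq_zero_iff_of_nonneg (fun _ => Metric.infDist_nonneg) hint).1
      (le_antisymm h (integral_nonneg fun _ => Metric.infDist_nonneg))
  exact measure_mono_null (fun z hz => ((hY.notMem_iff_infDist_pos hYne).1 hz).ne')
    (ae_iff.1 hzero)

theorem measure_le_measure_of_coupling {X : Type*} [MeasurableSpace X] {Y : Set (X × X)}
    {μ ν : Measure X} {π : Measure (X × X)} (hμ : π.map Prod.fst = μ)
    (hν : π.map Prod.snd = ν) (hπY : π Yᶜ = 0) {S : Set X} (hS : MeasurableSet S) :
    μ S ≤ ν {y | ∃ x ∈ S, (x, y) ∈ Y} := by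
  rw [← hμ, ← hν, Measure.map_apply measurable_fst hS]
  refine (measure_mono_ae ?_).trans (Measure.le_map_apply measurable_snd.aemeasurable _)
  filter_upwards [measure_eq_zero_iff_ae_notMem.1 hπY] with z hz hzS
  exact ⟨z.1, hzS, by simpa using hz⟩

theorem exists_coupling_of_hall {X : Type*} [MetricSpace X] [CompactSpace X]
    [MeasurableSpace X] [BorelSpace X] {Y : Set (X × X)} (hY : IsClosed Y)
    {μ ν : Measure X} [IsProbabilityMeasure μ] [IsProbabilityMeasure ν]
    (hall : ∀ S : Set X, IsClosed S → μ S ≤ ν {y | ∃ x ∈ S, (x, y) ∈ Y}) :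
    ∃ π : Measure (X × X), IsProbabilityMeasure π ∧
      π.map Prod.fst = μ ∧ π.map Prod.snd = ν ∧ π Yᶜ = 0 := by
  have hYne : Y.Nonempty := by
    by_contra hY
    simpa [not_nonempty_iff_eq_empty.1 hY] using hall univ isClosed_univ
  obtain ⟨L, hLfst, hLsnd, hLY⟩ := exists_linearMap_le_iSup_of_hall hall
  have hL_nonneg : ∀ h, 0 ≤ h → 0 ≤ L h := fun h hh => by
    simpa using (hLY (-h)).trans (Real.iSup_le (fun z => neg_nonpos.2 (hh z)) le_rfl)
  obtain ⟨π, _, hπL⟩ := exists_isFiniteMeasure_integral_eq L hL_nonneg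
  have hfst : π.map Prod.fst = μ := Measure.map_eq_of_forall_integral_comp_eq measurable_fst
    fun f => (hπL (f.toContinuousMap.comp .fst)).trans (hLfst _)
  have hsnd : π.map Prod.snd = ν := Measure.map_eq_of_forall_integral_comp_eq measurable_snd
    fun g => (hπL (g.toContinuousMap.comp .snd)).trans (hLsnd _)
  have hπ : IsProbabilityMeasure π :=
    ⟨by simpa [Measure.map_apply measurable_fst MeasurableSet.univ] using congrArg (· univ) hfst⟩
  let u : C(X × X, ℝ) := ⟨fun z => Metric.infDist z Y, Metric.continuous_infDist_pt Y⟩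
  refine ⟨π, hπ, hfst, hsnd,
    measure_compl_eq_zero_of_integral_infDist_nonpos hY hYne (u.integrable π) ?_⟩
  calc ∫ z, u z ∂π = L u := hπL u
    _ ≤ ⨆ z : Y, u z := hLY u
    _ ≤ 0 := Real.iSup_le (fun z => (Metric.infDist_zero_of_mem z.2).le) le_rfl

/-- **A continuous Hall theorem.** Let `(X,d)` be a compact metric space, `Y ⊆ X × X` a
closed subset, and `μ, ν` Borel probability measures on `X`. There exists a `(μ,ν)`-coupling
`π` supported on `Y` if and only if `ν (p₁₂^Y S) ≥ μ S` for every closed `S ⊆ X`. -/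
theorem stmt_0 {X : Type*} [MetricSpace X] [CompactSpace X]
    [MeasurableSpace X] [BorelSpace X]
    (Y : Set (X × X)) (hY : IsClosed Y)
    (μ ν : Measure X) [IsProbabilityMeasure μ] [IsProbabilityMeasure ν] :
    (∃ π : Measure (X × X), IsProbabilityMeasure π ∧
        π.map Prod.fst = μ ∧ π.map Prod.snd = ν ∧ π Yᶜ = 0) ↔
      ∀ S : Set X, IsClosed S → μ S ≤ ν {y | ∃ x ∈ S, (x, y) ∈ Y} :=
  ⟨fun ⟨_, _, hμ, hν, hπY⟩ _ hS => measure_le_measure_of_coupling hμ hν hπY hS.measurableSet,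
    exists_coupling_of_hall hY⟩
end

section
/- Let μ and ν be Borel probability measures on a compact metric space (X,d) and let Y ⊆ X × X be a closed subset. Suppose that ν(p₁₂^Y(S)) ≥ μ(S) for every closed subset S ⊆ X. Then for every pair of continuous real-valued functions f, g on X satisfying f(x) + g(x') ≥ 0 for all (x,x') ∈ Y, one has ∫_X f dμ + ∫_X g dν ≥ 0. -/
/-!
For the closed sublevel set `S = {f ≤ t}`, every `x'` with `(x, x') ∈ Y` for some `x ∈ S` has
`-g x' ≤ f x ≤ t`, so the hypothesis gives `μ {f ≤ t} ≤ ν {-g ≤ t}` for all `t`: the law of `f`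
under `μ` stochastically dominates the law of `-g` under `ν`. By the layer cake formula, applied
to positive and negative parts separately, stochastic dominance orders the means, so
`∫ -g dν ≤ ∫ f dμ`.
-/

open MeasureTheory Set

section StochasticDominance

variable {X : Type*} [MeasurableSpace X] {μ : Measure X} {f : X → ℝ}

lemma lintegral_ofReal_eq_lintegral_meas_lt_of_aemeasurable (hf : AEMeasurable f μ) :
    ∫⁻ x, ENNReal.ofReal (f x) ∂μ = ∫⁻ t in Ioi 0, μ {x | t < f x} := by
  have hmax : ∀ x, ENNReal.ofReal (f x) = ENNReal.ofReal (max (f x) 0) := fun x => by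
    simp [ENNReal.ofReal_max]
  simp_rw [hmax]
  rw [lintegral_eq_lintegral_meas_lt μ (f := fun x => max (f x) 0)
    (.of_forall fun _ => le_max_right _ _) (hf.max aemeasurable_const)]
  refine setLIntegral_congr_fun measurableSet_Ioi fun t (ht : 0 < t) => ?_
  simp only [lt_max_iff, ht.not_gt, or_false]

lemma lintegral_ofReal_eq_lintegral_meas_le_of_aemeasurable (hf : AEMeasurable f μ) :
    ∫⁻ x, ENNReal.ofReal (f x) ∂μ = ∫⁻ t in Ioi 0, μ {x | t ≤ f x} := by
  have hmax : ∀ x, ENNReal.ofReal (f x) = ENNReal.ofReal (max (f x) 0) := fun x => by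
    simp [ENNReal.ofReal_max]
  simp_rw [hmax]
  rw [lintegral_eq_lintegral_meas_le μ (f := fun x => max (f x) 0)
    (.of_forall fun _ => le_max_right _ _) (hf.max aemeasurable_const)]
  refine setLIntegral_congr_fun measurableSet_Ioi fun t (ht : 0 < t) => ?_
  simp only [le_max_iff, ht.not_ge, or_false]

lemma prob_setOf_lt_eq_one_sub [IsProbabilityMeasure μ] (hf : AEMeasurable f μ) (t : ℝ) :
    μ {x | t < f x} = 1 - μ {x | f x ≤ t} := by
  rw [← prob_compl_eq_one_sub₀ (nullMeasurableSet_le hf aemeasurable_const)]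
  simp only [compl_ofPred, not_le]

theorem integral_le_integral_of_forall_measure_le_le {Z : Type*} [MeasurableSpace Z]
    {ν : Measure Z} [IsProbabilityMeasure μ] [IsProbabilityMeasure ν] {h : Z → ℝ}
    (hf : Integrable f μ) (hh : Integrable h ν)
    (hcdf : ∀ t, μ {x | f x ≤ t} ≤ ν {z | h z ≤ t}) :
    ∫ z, h z ∂ν ≤ ∫ x, f x ∂μ := by
  have hpos : ∫⁻ z, ENNReal.ofReal (h z) ∂ν ≤ ∫⁻ x, ENNReal.ofReal (f x) ∂μ := by
    rw [lintegral_ofReal_eq_lintegral_meas_lt_of_aemeasurable hf.aemeasurable,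
      lintegral_ofReal_eq_lintegral_meas_lt_of_aemeasurable hh.aemeasurable]
    refine setLIntegral_mono' measurableSet_Ioi fun t _ => ?_
    rw [prob_setOf_lt_eq_one_sub hf.aemeasurable, prob_setOf_lt_eq_one_sub hh.aemeasurable]
    exact tsub_le_tsub_left (hcdf t) 1
  have hneg : ∫⁻ x, ENNReal.ofReal (-f x) ∂μ ≤ ∫⁻ z, ENNReal.ofReal (-h z) ∂ν := by
    rw [lintegral_ofReal_eq_lintegral_meas_le_of_aemeasurable (f := fun x => -f x)
        hf.neg.aemeasurable,
      lintegral_ofReal_eq_lintegral_meas_le_of_aemeasurable (f := fun z => -h z)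
        hh.neg.aemeasurable]
    refine setLIntegral_mono' measurableSet_Ioi fun t _ => ?_
    simpa only [le_neg] using hcdf (-t)
  rw [integral_eq_lintegral_pos_part_sub_lintegral_neg_part hf,
    integral_eq_lintegral_pos_part_sub_lintegral_neg_part hh]
  gcongr
  · exact hf.lintegral_lt_top.ne
  · exact hh.neg.lintegral_lt_top.ne

end StochasticDominance

theorem stmt_2_general {X : Type*} [MetricSpace X] [CompactSpace X]
    [MeasurableSpace X] [BorelSpace X]
    (μ ν : Measure X) [IsProbabilityMeasure μ] [IsProbabilityMeasure ν]
    (Y : Set (X × X))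
    (hHall : ∀ S : Set X, IsClosed S → μ S ≤ ν {y | ∃ x ∈ S, (x, y) ∈ Y})
    (f g : C(X, ℝ)) (hfg : ∀ p ∈ Y, 0 ≤ f p.1 + g p.2) :
    0 ≤ (∫ x, f x ∂μ) + ∫ x, g x ∂ν := by
  have hcdf (t : ℝ) : μ {x | f x ≤ t} ≤ ν {y | -g y ≤ t} := by
    refine (hHall _ (isClosed_le f.continuous continuous_const)).trans (measure_mono ?_)
    rintro y ⟨x, hxt, hxy⟩
    have hsum := hfg (x, y) hxy
    simp only [mem_ofPred_eq] at hxt ⊢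
    linarith
  have hmean := integral_le_integral_of_forall_measure_le_le (h := fun y => -g y)
    (f.continuous.integrable_of_hasCompactSupport (.of_compactSpace _))
    (g.continuous.neg.integrable_of_hasCompactSupport (.of_compactSpace _)) hcdf
  rw [integral_neg] at hmean
  linarith

/-- If `ν (p₁₂^Y S) ≥ μ S` for every closed `S ⊆ X`, then for all continuous `f, g : X → ℝ`
with `f x + g x' ≥ 0` for all `(x,x') ∈ Y`, we have `∫ f dμ + ∫ g dν ≥ 0`. -/
theorem stmt_2 {X : Type*} [MetricSpace X] [CompactSpace X]
    [MeasurableSpace X] [BorelSpace X]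
    (μ ν : Measure X) [IsProbabilityMeasure μ] [IsProbabilityMeasure ν]
    (Y : Set (X × X)) (hY : IsClosed Y)
    (hHall : ∀ S : Set X, IsClosed S → μ S ≤ ν {y | ∃ x ∈ S, (x, y) ∈ Y})
    (f g : C(X, ℝ)) (hfg : ∀ p ∈ Y, 0 ≤ f p.1 + g p.2) :
    0 ≤ (∫ x, f x ∂μ) + ∫ x, g x ∂ν :=
  stmt_2_general μ ν Y hHall f g hfg
end

section
/- Let (X,d) be a compact metric space, let μ and ν be Borel probability measures on X, and let r ≥ 0. The following are equivalent: (1) W_p(μ,ν) ≤ r for every real p ≥ 1; (2) there exists a (μ,ν)-coupling π supported on the closed set {(z,z') ∈ X × X | d(z,z') ≤ r}, i.e. π({(z,z') | d(z,z') > r}) = 0. -/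
open MeasureTheory

/-- The set of `(μ,ν)`-couplings: probability measures on `X × X` with marginals `μ` and `ν`. -/
def IsCoupling {X : Type*} [MeasurableSpace X]
    (π : Measure (X × X)) (μ ν : Measure X) : Prop :=
  IsProbabilityMeasure π ∧ π.map Prod.fst = μ ∧ π.map Prod.snd = ν

/-- The Wasserstein `p`-distance `W_p(μ,ν)`: the infimum over `(μ,ν)`-couplings `π` of
`(∫ d(x,y)^p dπ)^(1/p)`. -/
noncomputable def wassersteinDist {X : Type*} [MetricSpace X] [MeasurableSpace X]
    (p : ℝ) (μ ν : Measure X) : ℝ :=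
  sInf { r : ℝ | ∃ π : Measure (X × X), IsCoupling π μ ν ∧
      r = (∫ z, dist z.1 z.2 ^ p ∂π) ^ (1 / p) }

/-!
If a coupling is supported on `{d ≤ r}`, then `∫ d ^ p ≤ r ^ p` for every `p`. Conversely, by
Markov's inequality a coupling with `(∫ d ^ p) ^ (1 / p) < r + ε / 2` gives mass at most
`((r + ε / 2) / (r + ε)) ^ p` to the open set `{r + ε < d}`, which is below `ε` for large `p`.
Since `X × X` is compact, so is its space of probability measures; couplings form a closed
subset and the mass of an open set is lower semicontinuous. Hence the decreasing nonempty closed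
sets of couplings giving mass at most `ε` to `{r + ε < d}`, `ε = 1 / (n + 1)`, have a common
point, and it gives no mass to `{r < d}`.
-/

open Filter Set Topology ENNReal

namespace MeasureTheory

theorem ProbabilityMeasure.isClosed_setOf_measure_le_of_isOpen {Ω : Type*} [MeasurableSpace Ω]
    [TopologicalSpace Ω] [OpensMeasurableSpace Ω] [HasOuterApproxClosed Ω]
    {G : Set Ω} (hG : IsOpen G) (t : ℝ≥0∞) :
    IsClosed {π : ProbabilityMeasure Ω | (π : Measure Ω) G ≤ t} := by
  refine isClosed_iff_frequently.2 fun π hπ => ?_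
  calc (π : Measure Ω) G ≤ liminf (fun σ : ProbabilityMeasure Ω => (σ : Measure Ω) G) (𝓝 π) :=
        ProbabilityMeasure.le_liminf_measure_open_of_tendsto tendsto_id hG
    _ ≤ t := liminf_le_of_frequently_le' hπ

theorem measure_setOf_lt_le_of_integral_rpow_le {α : Type*} [MeasurableSpace α] {π : Measure α}
    [IsFiniteMeasure π] {f : α → ℝ} (hf : 0 ≤ f) {p a b : ℝ} (hp : 0 < p) (ha : 0 < a)
    (hb : 0 ≤ b)
    (hfp : Integrable (fun x => f x ^ p) π) (h : ∫ x, f x ^ p ∂π ≤ b ^ p) :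
    π {x | a < f x} ≤ ENNReal.ofReal ((b / a) ^ p) := by
  have hap : 0 < a ^ p := Real.rpow_pos_of_pos ha p
  have hsub : {x | a < f x} ⊆ {x | a ^ p ≤ f x ^ p} := fun x hx =>
    Real.rpow_le_rpow ha.le (le_of_lt hx) hp.le
  have markov := mul_meas_ge_le_integral_of_nonneg
    (Eventually.of_forall fun x => Real.rpow_nonneg (hf x) p) hfp (a ^ p)
  calc π {x | a < f x} ≤ π {x | a ^ p ≤ f x ^ p} := measure_mono hsub
    _ = ENNReal.ofReal (π.real {x | a ^ p ≤ f x ^ p}) :=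
      (ofReal_measureReal (measure_ne_top _ _)).symm
    _ ≤ ENNReal.ofReal ((b / a) ^ p) := by
      gcongr
      rw [Real.div_rpow hb ha.le, le_div_iff₀ hap, mul_comm]
      linarith

theorem measure_setOf_lt_eq_zero_of_tendsto {α : Type*} [MeasurableSpace α]
    {π : Measure α} {f : α → ℝ} {r : ℝ} {ε : ℕ → ℝ} (hε_anti : Antitone ε)
    (hε_lim : Tendsto ε atTop (𝓝 0))
    (h : ∀ n, π {x | r + ε n < f x} ≤ ENNReal.ofReal (ε n)) :
    π {x | r < f x} = 0 := by
  have hmono : Monotone fun n => {x | r + ε n < f x} := fun m n hmn x (hx : r + ε m < f x) =>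
    show r + ε n < f x by linarith [hε_anti hmn]
  have hunion : ⋃ n, {x | r + ε n < f x} = {x | r < f x} := by
    ext x
    simp only [mem_iUnion, mem_ofPred_eq]
    refine ⟨fun ⟨n, hn⟩ => ?_, fun hx => ?_⟩
    · have := hε_anti.le_of_tendsto hε_lim n
      linarith
    · obtain ⟨n, hn⟩ := (hε_lim.eventually (gt_mem_nhds (sub_pos.2 hx))).exists
      exact ⟨n, by linarith⟩
  have hlim := tendsto_measure_iUnion_atTop (μ := π) hmono
  rw [hunion] at hlim
  have hbound : Tendsto (fun n => ENNReal.ofReal (ε n)) atTop (𝓝 0) := by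
    simpa using ENNReal.tendsto_ofReal hε_lim
  exact tendsto_nhds_unique hlim
    (tendsto_of_tendsto_of_tendsto_of_le_of_le tendsto_const_nhds hbound (fun _ => zero_le) h)

end MeasureTheory

section Coupling

variable {X : Type*} [MeasurableSpace X]

theorem isCoupling_prod (μ ν : Measure X) [IsProbabilityMeasure μ] [IsProbabilityMeasure ν] :
    IsCoupling (μ.prod ν) μ ν :=
  ⟨inferInstance, Measure.fst_prod, Measure.snd_prod⟩

theorem isClosed_setOf_isCoupling [TopologicalSpace X] [SecondCountableTopology X]
    [HasOuterApproxClosed X] [BorelSpace X]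
    (μ ν : Measure X) [IsProbabilityMeasure μ] [IsProbabilityMeasure ν] :
    IsClosed {π : ProbabilityMeasure (X × X) | IsCoupling (π : Measure (X × X)) μ ν} := by
  have hcoup : {π : ProbabilityMeasure (X × X) | IsCoupling (π : Measure (X × X)) μ ν} =
      {π | π.map continuous_fst.measurable.aemeasurable = ⟨μ, inferInstance⟩} ∩
      {π | π.map continuous_snd.measurable.aemeasurable = ⟨ν, inferInstance⟩} := by
    ext π
    exact ⟨fun h => ⟨Subtype.ext h.2.1, Subtype.ext h.2.2⟩,
      fun h => ⟨π.2, congrArg Subtype.val h.1, congrArg Subtype.val h.2⟩⟩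
  rw [hcoup]
  exact (isClosed_eq (ProbabilityMeasure.continuous_map continuous_fst) continuous_const).inter
    (isClosed_eq (ProbabilityMeasure.continuous_map continuous_snd) continuous_const)

end Coupling

section Wasserstein

variable {X : Type*} [MetricSpace X] [MeasurableSpace X] {μ ν : Measure X}

theorem wassersteinDist_le_of_isCoupling {p : ℝ} {π : Measure (X × X)} (hπ : IsCoupling π μ ν) :
    wassersteinDist p μ ν ≤ (∫ z, dist z.1 z.2 ^ p ∂π) ^ (1 / p) :=
  csInf_le ⟨0, by rintro _ ⟨π', -, rfl⟩; positivity⟩ ⟨π, hπ, rfl⟩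

theorem exists_isCoupling_rpow_integral_lt [IsProbabilityMeasure μ] [IsProbabilityMeasure ν]
    {p s : ℝ} (hs : wassersteinDist p μ ν < s) :
    ∃ π, IsCoupling π μ ν ∧ (∫ z, dist z.1 z.2 ^ p ∂π) ^ (1 / p) < s := by
  have hne : Set.Nonempty {r : ℝ | ∃ π : Measure (X × X), IsCoupling π μ ν ∧
      r = (∫ z, dist z.1 z.2 ^ p ∂π) ^ (1 / p)} := ⟨_, μ.prod ν, isCoupling_prod μ ν, rfl⟩
  obtain ⟨_, ⟨π, hπ, rfl⟩, hlt⟩ := exists_lt_of_csInf_lt hne hs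
  exact ⟨π, hπ, hlt⟩

theorem wassersteinDist_le_of_measure_lt_dist_eq_zero {p r : ℝ} (hp : 0 < p) (hr : 0 ≤ r)
    {π : Measure (X × X)} (hπ : IsCoupling π μ ν) (h0 : π {z | r < dist z.1 z.2} = 0) :
    wassersteinDist p μ ν ≤ r := by
  have := hπ.1
  have hle : ∀ᵐ z ∂π, dist z.1 z.2 ^ p ≤ r ^ p :=
    (measure_eq_zero_iff_ae_notMem.1 h0).mono fun z hz =>
      Real.rpow_le_rpow dist_nonneg (not_lt.1 hz) hp.le
  have hint : ∫ z, dist z.1 z.2 ^ p ∂π ≤ r ^ p := by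
    simpa using integral_mono_of_nonneg (ae_of_all _ fun z => by positivity)
      (integrable_const (r ^ p)) hle
  calc wassersteinDist p μ ν ≤ (∫ z, dist z.1 z.2 ^ p ∂π) ^ (1 / p) :=
        wassersteinDist_le_of_isCoupling hπ
    _ ≤ r := by
      rw [one_div, Real.rpow_inv_le_iff_of_pos (by positivity) hr hp]
      exact hint

theorem integrable_dist_rpow [CompactSpace X] [BorelSpace X] {p : ℝ} (hp : 0 ≤ p)
    (π : Measure (X × X)) [IsFiniteMeasure π] :
    Integrable (fun z : X × X => dist z.1 z.2 ^ p) π :=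
  (continuous_dist.rpow_const fun _ => Or.inr hp).integrable_of_hasCompactSupport
    (HasCompactSupport.of_compactSpace _)

theorem exists_isCoupling_measure_lt_dist_le [CompactSpace X] [BorelSpace X]
    [IsProbabilityMeasure μ] [IsProbabilityMeasure ν] {r : ℝ} (hr : 0 ≤ r)
    (hW : ∀ p : ℝ, 1 ≤ p → wassersteinDist p μ ν ≤ r) {ε : ℝ} (hε : 0 < ε) :
    ∃ π, IsCoupling π μ ν ∧ π {z | r + ε < dist z.1 z.2} ≤ ENNReal.ofReal ε := by
  set c := (r + ε / 2) / (r + ε)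
  have hc : c < 1 := by rw [div_lt_one (by positivity)]; linarith
  obtain ⟨k, hk⟩ := exists_pow_lt_of_lt_one hε hc
  set p : ℝ := ((k + 1 : ℕ) : ℝ)
  have hp : 1 ≤ p := by simp [p]
  obtain ⟨π, hπ, hπp⟩ :=
    exists_isCoupling_rpow_integral_lt ((hW p hp).trans_lt (by linarith : r < r + ε / 2))
  have := hπ.1
  rw [one_div, Real.rpow_inv_lt_iff_of_pos (by positivity) (by positivity) (by positivity)]
    at hπp
  refine ⟨π, hπ, (measure_setOf_lt_le_of_integral_rpow_le (fun z => dist_nonneg)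
    (by positivity) (by positivity) (by positivity) (integrable_dist_rpow (by positivity) π)
    hπp.le).trans (ENNReal.ofReal_le_ofReal ?_)⟩
  calc c ^ p = c ^ (k + 1) := Real.rpow_natCast c (k + 1)
    _ ≤ c ^ k := pow_le_pow_of_le_one (by positivity) hc.le k.le_succ
    _ ≤ ε := hk.le

end Wasserstein

/-- `W_p(μ,ν) ≤ r` for all `p ≥ 1` iff there is a `(μ,ν)`-coupling supported on the set
of pairs of points at distance at most `r` apart. -/
theorem stmt_5 {X : Type*} [MetricSpace X] [CompactSpace X]
    [MeasurableSpace X] [BorelSpace X]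
    (μ ν : Measure X) [IsProbabilityMeasure μ] [IsProbabilityMeasure ν]
    (r : ℝ) (hr : 0 ≤ r) :
    (∀ p : ℝ, 1 ≤ p → wassersteinDist p μ ν ≤ r) ↔
      ∃ π : Measure (X × X), IsCoupling π μ ν ∧
        π {z : X × X | r < dist z.1 z.2} = 0 := by
  refine ⟨fun hW => ?_, fun ⟨π, hπ, h0⟩ p hp =>
    wassersteinDist_le_of_measure_lt_dist_eq_zero (by linarith) hr hπ h0⟩
  set ε : ℕ → ℝ := fun n => 1 / (n + 1)
  have hε_anti : Antitone ε := fun _ _ h => Nat.one_div_le_one_div h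
  let S : ℕ → Set (ProbabilityMeasure (X × X)) := fun n =>
    {π | IsCoupling (π : Measure (X × X)) μ ν} ∩
      {π | (π : Measure (X × X)) {z | r + ε n < dist z.1 z.2} ≤ ENNReal.ofReal (ε n)}
  have hS_closed n : IsClosed (S n) :=
    (isClosed_setOf_isCoupling μ ν).inter <| ProbabilityMeasure.isClosed_setOf_measure_le_of_isOpen
      (isOpen_lt continuous_const continuous_dist) _
  have hS_nonempty n : (S n).Nonempty := by
    obtain ⟨π, hπ, hπε⟩ := exists_isCoupling_measure_lt_dist_le hr hW (by positivity : 0 < ε n)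
    exact ⟨⟨π, hπ.1⟩, hπ, hπε⟩
  have hS_anti n : S (n + 1) ⊆ S n := by
    rintro π ⟨hπ, hπε⟩
    refine ⟨hπ, (measure_mono fun z hz => ?_).trans
      (hπε.trans (ENNReal.ofReal_le_ofReal (hε_anti n.le_succ)))⟩
    simp only [mem_ofPred_eq] at hz ⊢
    linarith [hε_anti n.le_succ]
  obtain ⟨π, hπ⟩ := IsCompact.nonempty_iInter_of_sequence_nonempty_isCompact_isClosed S hS_anti
    hS_nonempty (hS_closed 0).isCompact hS_closed
  rw [mem_iInter] at hπ
  exact ⟨π, (hπ 0).1, measure_setOf_lt_eq_zero_of_tendsto hε_anti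
    tendsto_one_div_add_atTop_nhds_zero_nat fun n => (hπ n).2⟩
end

section
/- Let X be a finite set, let Y ⊆ X × X be a subset, and let μ and ν be probability measures on X. Then there exists a (μ,ν)-coupling π supported on Y (i.e. π((X × X) \ Y) = 0) if and only if ν(p₁₂^Y(S)) ≥ μ(S) for every subset S ⊆ X. -/
/-!
Necessity is immediate: a coupling supported on `Y` moves the mass of `S` into `p₁₂^Y(S)`.
For sufficiency, write `f x = μ {x}` and `g y = ν {y}`. Scaling by `N` and rounding `N f` down
and `N g` up preserves Hall's condition, so Hall's marriage theorem, applied after replacing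
each point by as many copies as its integer weight, gives an integral plan whose rows and
columns, divided by `N`, are within `1 / N` of `f` and `g`. These approximate plans form a decreasing sequence of nonempty
compact sets; a point of the intersection has row sums `≥ f` and column sums `≤ g`, hence,
both having total mass `1`, is an exact plan `w`. The coupling is `∑ w x y • δ_(x, y)`.
-/

open MeasureTheory Finset Filter Topology
open scoped ENNReal

section Transport

variable {α β : Type*} [Fintype α] [Fintype β]

theorem exists_nat_transport_of_hall [DecidableEq β] (t : α → Finset β) (A : α → ℕ) (B : β → ℕ)
    (hall : ∀ s : Finset α, ∑ a ∈ s, A a ≤ ∑ b ∈ s.biUnion t, B b) :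
    ∃ m : α → β → ℕ, (∀ a, ∀ b ∉ t a, m a b = 0) ∧ (∀ a, ∑ b, m a b = A a) ∧
      ∀ b, ∑ a, m a b ≤ B b := by
  classical
  let T : (Σ a, Fin (A a)) → Finset (Σ b, Fin (B b)) := fun i => (t i.1).sigma fun _ => univ
  have hT : ∀ s, #s ≤ #(s.biUnion T) := fun s => calc
    #s ≤ #((s.image Sigma.fst).sigma fun a => (univ : Finset (Fin (A a)))) :=
        card_le_card fun i hi => mem_sigma.2 ⟨mem_image_of_mem _ hi, mem_univ _⟩
    _ ≤ #(((s.image Sigma.fst).biUnion t).sigma fun b => (univ : Finset (Fin (B b)))) := by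
        simpa [card_sigma] using hall _
    _ ≤ #(s.biUnion T) := card_le_card fun k hk => by
        simp only [mem_sigma, mem_biUnion, mem_image] at hk
        obtain ⟨⟨a, ⟨i, hi, rfl⟩, hb⟩, -⟩ := hk
        exact mem_biUnion.2 ⟨i, hi, mem_sigma.2 ⟨hb, mem_univ _⟩⟩
  obtain ⟨φ, hφ, hφT⟩ := (all_card_le_biUnion_card_iff_exists_injective T).1 hT
  refine ⟨fun a b => #{i : Fin (A a) | (φ ⟨a, i⟩).1 = b}, fun a b hb => ?_, fun a => ?_,
    fun b => ?_⟩
  · refine card_eq_zero.2 (filter_eq_empty_iff.2 fun i _ hi => hb ?_)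
    simpa [T, hi] using (mem_sigma.1 (hφT ⟨a, i⟩)).1
  · simpa using (card_eq_sum_card_fiberwise (s := univ) (t := univ)
      (f := fun i : Fin (A a) => (φ ⟨a, i⟩).1) fun _ _ => mem_univ _).symm
  · calc ∑ a, #{i : Fin (A a) | (φ ⟨a, i⟩).1 = b} = #{i | (φ i).1 = b} := by
          rw [← card_sigma]; congr 1; ext ⟨a, i⟩; simp
      _ ≤ #{k : Σ b, Fin (B b) | k.1 = b} :=
          card_le_card_of_injOn φ (fun i hi => by simpa using hi) hφ.injOn
      _ = B b := by
          rw [show ({k | k.1 = b} : Finset (Σ b, Fin (B b))) = ({b} : Finset β).sigma fun _ => univ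
            by ext ⟨b', j⟩; simp, card_sigma]
          simp

def approxTransportPlans (t : α → Finset β) (f : α → ℝ) (g : β → ℝ) (ε : ℝ) :
    Set (α → β → ℝ) :=
  {w | (∀ a b, 0 ≤ w a b) ∧ (∀ a, ∀ b ∉ t a, w a b = 0) ∧ (∀ a, f a ≤ ∑ b, w a b + ε) ∧
    ∀ b, ∑ a, w a b ≤ g b + ε}

variable (t : α → Finset β) (f : α → ℝ) (g : β → ℝ)

theorem approxTransportPlans_mono {ε ε' : ℝ} (h : ε ≤ ε') :
    approxTransportPlans t f g ε ⊆ approxTransportPlans t f g ε' :=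
  fun _ ⟨h0, hsupp, hrow, hcol⟩ =>
    ⟨h0, hsupp, fun a => (hrow a).trans (by linarith), fun b => (hcol b).trans (by linarith)⟩

theorem isClosed_approxTransportPlans (ε : ℝ) : IsClosed (approxTransportPlans t f g ε) := by
  simp only [approxTransportPlans, Set.ofPred_and, Set.ofPred_forall]
  refine .inter (isClosed_iInter fun a => isClosed_iInter fun b => ?_) <| .inter
    (isClosed_iInter fun a => isClosed_iInter fun b => isClosed_iInter fun _ => ?_) <| .inter
    (isClosed_iInter fun a => ?_) (isClosed_iInter fun b => ?_)
  all_goals first | apply isClosed_le | apply isClosed_eq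
  all_goals fun_prop

theorem isCompact_approxTransportPlans (ε : ℝ) : IsCompact (approxTransportPlans t f g ε) := by
  refine (isCompact_univ_pi fun _ => isCompact_univ_pi fun b => isCompact_Icc (a := 0)
    (b := g b + ε)).of_isClosed_subset (isClosed_approxTransportPlans t f g ε) ?_
  rintro w ⟨h0, -, -, hcol⟩ a - b -
  exact ⟨h0 a b, (single_le_sum (fun a' _ => h0 a' b) (mem_univ a)).trans (hcol b)⟩

theorem approxTransportPlans_nonempty [DecidableEq β] (hf : ∀ a, 0 ≤ f a) (hg : ∀ b, 0 ≤ g b)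
    (hall : ∀ s : Finset α, ∑ a ∈ s, f a ≤ ∑ b ∈ s.biUnion t, g b) (n : ℕ) :
    (approxTransportPlans t f g (1 / (n + 1))).Nonempty := by
  set N : ℝ := n + 1
  have hN : 0 < N := by positivity
  obtain ⟨m, hsupp, hrow, hcol⟩ := exists_nat_transport_of_hall t (fun a => ⌊N * f a⌋₊)
    (fun b => ⌈N * g b⌉₊) fun s => by
      rw [← Nat.cast_le (α := ℝ)]
      push_cast
      calc ∑ a ∈ s, (⌊N * f a⌋₊ : ℝ) ≤ ∑ a ∈ s, N * f a :=
            sum_le_sum fun a _ => Nat.floor_le (by have := hf a; positivity)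
        _ ≤ ∑ b ∈ s.biUnion t, N * g b := by
            rw [← mul_sum, ← mul_sum]; exact mul_le_mul_of_nonneg_left (hall s) hN.le
        _ ≤ ∑ b ∈ s.biUnion t, (⌈N * g b⌉₊ : ℝ) := sum_le_sum fun b _ => Nat.le_ceil _
  refine ⟨fun a b => m a b / N, fun a b => by positivity, fun a b hb => by simp [hsupp a b hb],
    fun a => ?_, fun b => ?_⟩
  · rw [← sum_div, ← Nat.cast_sum, hrow, ← add_div, le_div_iff₀ hN]
    linarith [Nat.sub_one_lt_floor (N * f a)]
  · rw [← sum_div, ← Nat.cast_sum, div_le_iff₀ hN, add_mul, one_div_mul_cancel hN.ne']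
    calc ((∑ a, m a b : ℕ) : ℝ) ≤ ⌈N * g b⌉₊ := by exact_mod_cast hcol b
      _ ≤ g b * N + 1 := by
          rw [mul_comm]; exact (Nat.ceil_lt_add_one (by have := hg b; positivity)).le

theorem iInter_approxTransportPlans :
    ⋂ n : ℕ, approxTransportPlans t f g (1 / (n + 1)) = approxTransportPlans t f g 0 := by
  refine subset_antisymm (fun w hw => ?_) (Set.subset_iInter fun n =>
    approxTransportPlans_mono t f g (by positivity))
  have hw' (n : ℕ) := Set.mem_iInter.1 hw n
  have hlim (x : ℝ) : Tendsto (fun n : ℕ => x + 1 / ((n : ℝ) + 1)) atTop (𝓝 (x + 0)) :=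
    tendsto_const_nhds.add tendsto_one_div_add_atTop_nhds_zero_nat
  exact ⟨(hw' 0).1, (hw' 0).2.1,
    fun a => ge_of_tendsto' (hlim _) fun n => (hw' n).2.2.1 a,
    fun b => ge_of_tendsto' (hlim _) fun n => (hw' n).2.2.2 b⟩

theorem approxTransportPlans_zero_marginals {w : α → β → ℝ}
    (hw : w ∈ approxTransportPlans t f g 0) (hfg : ∑ a, f a = ∑ b, g b) :
    (∀ a, ∑ b, w a b = f a) ∧ ∀ b, ∑ a, w a b = g b := by
  obtain ⟨-, -, hrow, hcol⟩ := hw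
  simp only [add_zero] at hrow hcol
  have hmass : ∑ a, ∑ b, w a b = ∑ a, f a := le_antisymm
    (by rw [sum_comm, hfg]; exact sum_le_sum fun b _ => hcol b) (sum_le_sum fun a _ => hrow a)
  refine ⟨fun a => ((sum_eq_sum_iff_of_le fun a _ => hrow a).1 hmass.symm a (mem_univ a)).symm,
    fun b => (sum_eq_sum_iff_of_le fun b _ => hcol b).1 ?_ b (mem_univ b)⟩
  rw [sum_comm, hmass, hfg]

theorem exists_transport_of_hall [DecidableEq β] (hf : ∀ a, 0 ≤ f a) (hg : ∀ b, 0 ≤ g b)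
    (hfg : ∑ a, f a = ∑ b, g b)
    (hall : ∀ s : Finset α, ∑ a ∈ s, f a ≤ ∑ b ∈ s.biUnion t, g b) :
    ∃ w : α → β → ℝ, (∀ a b, 0 ≤ w a b) ∧ (∀ a, ∀ b ∉ t a, w a b = 0) ∧
      (∀ a, ∑ b, w a b = f a) ∧ ∀ b, ∑ a, w a b = g b := by
  obtain ⟨w, hw⟩ := IsCompact.nonempty_iInter_of_sequence_nonempty_isCompact_isClosed _
    (fun n => approxTransportPlans_mono t f g (by gcongr; linarith))
    (approxTransportPlans_nonempty t f g hf hg hall) (isCompact_approxTransportPlans t f g _)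
    fun n => isClosed_approxTransportPlans t f g _
  rw [iInter_approxTransportPlans] at hw
  exact ⟨w, hw.1, hw.2.1, approxTransportPlans_zero_marginals t f g hw hfg⟩

end Transport

namespace MeasureTheory.Measure

variable {α β : Type*} [MeasurableSpace α] [MeasurableSpace β]

theorem le_measure_image_of_supported_coupling {μ : Measure α} {ν : Measure β} {π : Measure (α × β)}
    (hμ : π.map Prod.fst = μ) (hν : π.map Prod.snd = ν) {Y : Set (α × β)} (hY : π Yᶜ = 0)
    {S : Set α} (hS : MeasurableSet S) : μ S ≤ ν {y | ∃ x ∈ S, (x, y) ∈ Y} := calc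
  μ S = π (Prod.fst ⁻¹' S ∩ Y) := by
    rw [← hμ, map_apply measurable_fst hS, measure_inter_conull hY]
  _ ≤ π (Prod.snd ⁻¹' {y | ∃ x ∈ S, (x, y) ∈ Y}) := measure_mono fun p hp => ⟨p.1, hp.1, hp.2⟩
  _ ≤ ν {y | ∃ x ∈ S, (x, y) ∈ Y} := hν ▸ le_map_apply measurable_snd.aemeasurable _

variable [Fintype α] [Fintype β]

theorem eq_sum_smul_dirac [MeasurableSingletonClass α] (μ : Measure α) :
    μ = ∑ a, μ {a} • dirac a := by
  rw [← sum_fintype, sum_smul_dirac]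

theorem map_fst_sum_smul_dirac (c : α → β → ℝ≥0∞) :
    (∑ a, ∑ b, c a b • dirac (a, b)).map Prod.fst = ∑ a, (∑ b, c a b) • dirac a := by
  simp_rw [map_finset_sum' measurable_fst.aemeasurable, Measure.map_smul,
    map_dirac' measurable_fst, sum_smul]

theorem map_snd_sum_smul_dirac (c : α → β → ℝ≥0∞) :
    (∑ a, ∑ b, c a b • dirac (a, b)).map Prod.snd = ∑ b, (∑ a, c a b) • dirac b := by
  simp_rw [map_finset_sum' measurable_snd.aemeasurable, Measure.map_smul,
    map_dirac' measurable_snd, sum_smul]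
  exact Finset.sum_comm

theorem sum_smul_dirac_apply_eq_zero [MeasurableSingletonClass α] [MeasurableSingletonClass β]
    (c : α → β → ℝ≥0∞) {s : Set (α × β)} (hs : ∀ a b, (a, b) ∈ s → c a b = 0) :
    (∑ a, ∑ b, c a b • dirac (a, b)) s = 0 := by
  simp only [coe_finsetSum, Finset.sum_apply, smul_apply, smul_eq_mul]
  refine Finset.sum_eq_zero fun a _ => Finset.sum_eq_zero fun b _ => ?_
  by_cases hab : (a, b) ∈ s
  · simp [hs a b hab]
  · simp [hab]

end MeasureTheory.Measure

/-- **Hall's theorem for measures on a finite set.** For a finite set `X`, a subset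
`Y ⊆ X × X` and probability measures `μ, ν` on `X`, there is a `(μ,ν)`-coupling supported
on `Y` if and only if `ν (p₁₂^Y S) ≥ μ S` for every subset `S ⊆ X`. -/
theorem stmt_9 {X : Type*} [Fintype X]
    [MeasurableSpace X] [MeasurableSingletonClass X]
    (Y : Set (X × X))
    (μ ν : Measure X) [IsProbabilityMeasure μ] [IsProbabilityMeasure ν] :
    (∃ π : Measure (X × X), IsProbabilityMeasure π ∧
        π.map Prod.fst = μ ∧ π.map Prod.snd = ν ∧ π Yᶜ = 0) ↔
      ∀ S : Set X, μ S ≤ ν {y | ∃ x ∈ S, (x, y) ∈ Y} := by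
  classical
  refine ⟨fun ⟨π, _, hμ, hν, hY⟩ S => Measure.le_measure_image_of_supported_coupling hμ hν hY
    S.toFinite.measurableSet, fun hall => ?_⟩
  obtain ⟨w, hw0, hwY, hrow, hcol⟩ := exists_transport_of_hall (fun x => {y | (x, y) ∈ Y})
    (fun x => μ.real {x}) (fun y => ν.real {y}) (fun _ => measureReal_nonneg)
    (fun _ => measureReal_nonneg) (by simp) fun s => by
      rw [sum_measureReal_singleton, sum_measureReal_singleton]
      refine ENNReal.toReal_mono (measure_ne_top _ _) ((hall s).trans_eq ?_)
      congr 1; ext y; simp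
  set π := ∑ x, ∑ y, ENNReal.ofReal (w x y) • Measure.dirac (x, y)
  have hμ : π.map Prod.fst = μ := by
    rw [Measure.map_fst_sum_smul_dirac, μ.eq_sum_smul_dirac]
    congr! with x
    rw [← ENNReal.ofReal_sum_of_nonneg fun y _ => hw0 x y, hrow, ofReal_measureReal]
  have hν : π.map Prod.snd = ν := by
    rw [Measure.map_snd_sum_smul_dirac, ν.eq_sum_smul_dirac]
    congr! with y
    rw [← ENNReal.ofReal_sum_of_nonneg fun x _ => hw0 x y, hcol, ofReal_measureReal]
  have : IsProbabilityMeasure (π.map Prod.fst) := hμ ▸ ‹_›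
  refine ⟨π, Measure.isProbabilityMeasure_of_map Prod.fst, hμ, hν,
    Measure.sum_smul_dirac_apply_eq_zero _ fun x y hxy => ?_⟩
  simp [hwY x y (by simpa using hxy)]
end
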